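/- arXiv:1111.5220 — 2 statements merged into one kernel-verified Lean document; each statement's English description precedes it below -/
import Mathlib

section
/- (Observation 2, centroid path decomposition height.) Let T be a finite rooted ordered tree and let T^c be its centroid path decomposition, i.e., the path decomposition obtained by always choosing heavy paths. Then 2^{height(T^c)} ≤ leaves(T); in particular the height of T^c is at most log₂ of the number of leaves of T. -/
/-!
Induction on the decomposition. A child of the root of `d` is either a child of the root of the
decomposition of the heavy child, and is handled by induction, or the decomposition of a subtree
`c` hanging off the root. In the second case the heavy sibling has at least as many leaves as
`c`, so `t` has at least `2 * leaves c` leaves: every step down in `d` halves the number of leaves.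
-/

/-- A finite rooted ordered tree: a node with a (possibly empty) list of children. -/
inductive RTree : Type where
  | node : List RTree → RTree

namespace RTree

/-- Number of leaves of a tree; a leaf (node with no children) has one leaf. -/
def leaves : RTree → ℕ
  | node [] => 1
  | node cs => (cs.attach.map fun x => leaves x.1).sum
decreasing_by simp only [RTree.node.sizeOf_spec]; have := List.sizeOf_lt_of_mem x.2; omega

/-- Height of a tree: number of edges on a longest root-to-leaf path. -/
def height : RTree → ℕ
  | node cs => (cs.attach.map fun x => height x.1 + 1).foldr max 0
decreasing_by simp only [RTree.node.sizeOf_spec]; have := List.sizeOf_lt_of_mem x.2; omega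

/-- `CentroidDecomp t d` : `d` is a centroid path decomposition of `t`, i.e. a path
decomposition in which the chosen root-to-leaf path always descends to a heavy child
(a child with the maximal number of leaves, ties broken arbitrarily).
The root of `d` represents the chosen root-to-leaf path of `t`; its children are
centroid path decompositions of the subtrees hanging off the chosen path, arranged
in an arbitrary order. -/
inductive CentroidDecomp : RTree → RTree → Prop where
  | leaf : CentroidDecomp (node []) (node [])
  | step {cs : List RTree} (i : Fin cs.length) {hs ds es : List RTree} :
      (∀ j : Fin cs.length, leaves (cs.get j) ≤ leaves (cs.get i)) →
      CentroidDecomp (cs.get i) (node hs) →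
      List.Forall₂ CentroidDecomp (cs.eraseIdx i) ds →
      (ds ++ hs).Perm es →
      CentroidDecomp (node cs) (node es)

end RTree

theorem List.Forall₂.exists_of_mem_right {α β : Type*} {R : α → β → Prop} {l₁ : List α}
    {l₂ : List β} (h : List.Forall₂ R l₁ l₂) {b : β} (hb : b ∈ l₂) : ∃ a ∈ l₁, R a b := by
  induction h with
  | nil => simp at hb
  | cons hab _ ih =>
    rcases List.mem_cons.mp hb with rfl | hb
    · exact ⟨_, List.mem_cons_self, hab⟩
    · obtain ⟨a, ha, hab'⟩ := ih hb
      exact ⟨a, List.mem_cons_of_mem _ ha, hab'⟩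

namespace RTree

lemma leaves_node_of_ne_nil {cs : List RTree} (h : cs ≠ []) :
    leaves (node cs) = (cs.map leaves).sum := by
  obtain ⟨c, cs, rfl⟩ := List.exists_cons_of_ne_nil h
  rw [leaves] <;> simp

lemma leaves_pos : ∀ t : RTree, 0 < leaves t
  | node [] => by simp [leaves]
  | node (c :: cs) => by
    rw [leaves_node_of_ne_nil (List.cons_ne_nil c cs)]
    exact (leaves_pos c).trans_le (List.le_sum_of_mem (List.mem_map_of_mem List.mem_cons_self))

lemma leaves_le_leaves_node {cs : List RTree} {c : RTree} (hc : c ∈ cs) :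
    leaves c ≤ leaves (node cs) := by
  rw [leaves_node_of_ne_nil (List.ne_nil_of_mem hc)]
  exact List.le_sum_of_mem (List.mem_map_of_mem hc)

lemma leaves_add_leaves_le_leaves_node {cs : List RTree} (i : Fin cs.length) {c : RTree}
    (hc : c ∈ cs.eraseIdx i) : leaves (cs.get i) + leaves c ≤ leaves (node cs) := by
  have hperm : List.Perm (cs[i] :: cs.eraseIdx i) cs := List.getElem_cons_eraseIdx_perm i.2
  rw [leaves_node_of_ne_nil (List.ne_nil_of_mem (List.get_mem cs i)),
    ← (hperm.map leaves).sum_eq, List.map_cons, List.sum_cons]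
  exact Nat.add_le_add_left (List.le_sum_of_mem (List.mem_map_of_mem hc)) _

lemma height_node (cs : List RTree) :
    height (node cs) = (cs.map (height · + 1)).foldr max 0 := by
  rw [height]
  simp

lemma height_lt_height_node {cs : List RTree} {c : RTree} (hc : c ∈ cs) :
    height c < height (node cs) := by
  rw [height_node, Nat.lt_iff_add_one_le]
  exact List.le_max_of_le (List.mem_map_of_mem hc) le_rfl

lemma pow_height_node_le {cs : List RTree} {n : ℕ} (hn : n ≠ 0)
    (h : ∀ c ∈ cs, 2 ^ (height c + 1) ≤ n) : 2 ^ height (node cs) ≤ n := by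
  rw [height_node, ← Nat.le_log_iff_pow_le one_lt_two hn]
  refine List.max_le_of_forall_le _ _ fun k hk => ?_
  obtain ⟨c, hc, rfl⟩ := List.mem_map.mp hk
  exact (Nat.le_log_iff_pow_le one_lt_two hn).mpr (h c hc)

theorem CentroidDecomp.pow_height_le_leaves :
    ∀ {t d : RTree}, CentroidDecomp t d → 2 ^ height d ≤ leaves t
  | _, _, .leaf => by simp [height, leaves]
  | node cs, node es, .step (hs := hs) i hheavy hpath hrest hperm => by
    refine pow_height_node_le (leaves_pos _).ne' fun e he => ?_
    rcases List.mem_append.mp (hperm.mem_iff.mpr he) with hoff | hon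
    · obtain ⟨c, hc, hce⟩ := hrest.exists_of_mem_right hoff
      have hcs : c ∈ cs := List.mem_of_mem_eraseIdx hc
      calc 2 ^ (height e + 1) = 2 ^ height e + 2 ^ height e := by ring
        _ ≤ leaves (cs.get i) + leaves c := by
          have := hce.pow_height_le_leaves
          obtain ⟨k, rfl⟩ := List.get_of_mem hcs
          linarith [hheavy k]
        _ ≤ leaves (node cs) := leaves_add_leaves_le_leaves_node i hc
    · calc 2 ^ (height e + 1) ≤ 2 ^ height (node hs) :=
            Nat.pow_le_pow_right two_pos (height_lt_height_node hon)
        _ ≤ leaves (cs.get i) := hpath.pow_height_le_leaves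
        _ ≤ leaves (node cs) := leaves_le_leaves_node (List.get_mem cs i)
termination_by t => t
decreasing_by
  all_goals simp_wf
  · have := List.sizeOf_lt_of_mem hcs; omega
  · have := List.sizeOf_lt_of_mem (List.getElem_mem i.2); omega

end RTree

/-- Observation 2: if `d` is a centroid path decomposition of `t`, then
`2 ^ height d ≤ leaves t`; in particular the height of the centroid path decomposition
is at most `log₂ (leaves t)`. -/
theorem centroid_decomposition_height (t d : RTree) (hd : RTree.CentroidDecomp t d) :
    2 ^ RTree.height d ≤ RTree.leaves t :=
  hd.pow_height_le_leaves
end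

section
/- (Lemma: correctness of the Range Min tree forward search.) Let p be a balanced parentheses sequence of length 2n with excess function e, let i be a position holding an open parenthesis (so e(i+1) = e(i) + 1), and set the target x := e(i). Let the index range {i+1, …, 2n} be partitioned into consecutive nonempty blocks B₁, …, B_m, and for each block B_t let m_t := min over k ∈ B_t of e(k) and M_t := max over k ∈ B_t of e(k). Let j be the least t such that m_t ≤ x ≤ M_t (the block found by the Range Min-Max tree forward search, which contains the least k > i with e(k) = x), and let j' be the least t such that m_t ≤ x (the block found by the Range Min tree forward search). Then j' = j. -/
/-!
Since `i` holds an open parenthesis, the excess at the first position `i + 1` of the searched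
range is `x + 1`, and the excess drops by at most one per step. Hence if every block before
block `j'` has minimum above `x`, the excess at the start of block `j'` is still at least `x`,
so `maxs j' ≥ x`: block `j'` is already found by the min-max search, and `j = j'`.
-/

/-- The excess function of a parentheses sequence `p` (encoded as a list of booleans,
`true` = '(' and `false` = ')'): `excess p k` is the number of open parentheses minus
the number of closed parentheses among the first `k` symbols. -/
def excess (p : List Bool) (k : ℕ) : ℤ :=
  ((p.take k).count true : ℤ) - ((p.take k).count false : ℤ)

open Set

lemma excess_sub_one_le_excess_succ (p : List Bool) (k : ℕ) :
    excess p k - 1 ≤ excess p (k + 1) := by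
  rw [excess, excess, List.take_add_one]
  cases h : p[k]? with
  | none => simp
  | some b => cases b <;> simp [List.count_append] <;> omega

lemma excess_succ_of_get_eq_true (p : List Bool) (i : ℕ) (hi : i < p.length)
    (hopen : p.get ⟨i, hi⟩ = true) : excess p (i + 1) = excess p i + 1 := by
  rw [excess, excess, List.take_add_one, List.getElem?_eq_getElem hi]
  simp only [List.get_eq_getElem] at hopen
  simp [hopen, List.count_append]
  ring

lemma le_excess_of_lt_excess_on_Ico (p : List Bool) {a b : ℕ} (hab : a < b) {x : ℤ}
    (h : ∀ k ∈ Ico a b, x < excess p k) : x ≤ excess p b := by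
  have hlast := h (b - 1) ⟨by omega, by omega⟩
  have hstep := excess_sub_one_le_excess_succ p (b - 1)
  rw [Nat.sub_add_cancel (by omega)] at hstep
  omega

theorem range_min_tree_forward_search_general (p : List Bool)
    (i : ℕ) (hi : i < p.length) (hopen : p.get ⟨i, hi⟩ = true)
    -- the block boundaries: block `t` (for `t < m`) is `Set.Ico (bnd t) (bnd (t+1))`
    (m : ℕ) (bnd : ℕ → ℕ)
    (hbnd0 : bnd 0 = i + 1)
    (hbndmono : ∀ t, t < m → bnd t < bnd (t + 1))
    -- the stored minima and maxima of the excess within each block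
    (mins maxs : ℕ → ℤ)
    (hmins : ∀ t, t < m → IsLeast (excess p '' Set.Ico (bnd t) (bnd (t + 1))) (mins t))
    (hmaxs : ∀ t, t < m → IsGreatest (excess p '' Set.Ico (bnd t) (bnd (t + 1))) (maxs t))
    -- `j` : the least block index whose min and max enclose the target `excess p i`
    (j : ℕ)
    (hj : mins j ≤ excess p i ∧ excess p i ≤ maxs j)
    (hjleast : ∀ t, t < j → ¬(mins t ≤ excess p i ∧ excess p i ≤ maxs t))
    -- `j'` : the least block index whose min is at most the target `excess p i`
    (j' : ℕ) (hj'm : j' < m)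
    (hj' : mins j' ≤ excess p i)
    (hj'least : ∀ t, t < j' → ¬(mins t ≤ excess p i)) :
    j' = j := by
  have hstart : excess p i ≤ excess p (bnd j') := by
    cases j' with
    | zero => rw [hbnd0, excess_succ_of_get_eq_true p i hi hopen]; omega
    | succ s =>
      refine le_excess_of_lt_excess_on_Ico p (hbndmono s (by omega)) fun k hk => ?_
      have hmin_le := (hmins s (by omega)).2 (mem_image_of_mem _ hk)
      have hmin_gt := not_le.1 (hj'least s (Nat.lt_succ_self s))
      exact hmin_gt.trans_le hmin_le
  have hmax : excess p i ≤ maxs j' :=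
    hstart.trans ((hmaxs j' hj'm).2 (mem_image_of_mem _ ⟨le_rfl, hbndmono j' hj'm⟩))
  rcases lt_trichotomy j' j with h | h | h
  · exact absurd ⟨hj', hmax⟩ (hjleast j' h)
  · exact h
  · exact absurd hj.1 (hj'least j h)

/-- correctness of the Range Min tree forward search.
Let `p` be a balanced parentheses sequence of length `2 * n`, `i` a position holding an
open parenthesis and `x := excess p i` the search target.  The index range
`{i+1, …, 2n}` is partitioned into `m` consecutive nonempty blocks, the `t`-th block
(for `t < m`) being `{bnd t, …, bnd (t+1) - 1}`, with `bnd 0 = i + 1` and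
`bnd m = 2n + 1`; `mins t` and `maxs t` are the minimum and maximum of the excess on
the `t`-th block.  If `j` is the least block index with `mins j ≤ x ≤ maxs j` (the
block found by the Range Min-Max tree forward search) and `j'` is the least block index
with `mins j' ≤ x` (the block found by the Range Min tree forward search), then
`j' = j`. -/
theorem range_min_tree_forward_search (n : ℕ) (p : List Bool) (hlen : p.length = 2 * n)
    (hnonneg : ∀ k, k ≤ p.length → 0 ≤ excess p k)
    (hbal : excess p p.length = 0)
    (i : ℕ) (hi : i < p.length) (hopen : p.get ⟨i, hi⟩ = true)
    -- the block boundaries: block `t` (for `t < m`) is `Set.Ico (bnd t) (bnd (t+1))`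
    (m : ℕ) (bnd : ℕ → ℕ)
    (hbnd0 : bnd 0 = i + 1) (hbndm : bnd m = 2 * n + 1)
    (hbndmono : ∀ t, t < m → bnd t < bnd (t + 1))
    -- the stored minima and maxima of the excess within each block
    (mins maxs : ℕ → ℤ)
    (hmins : ∀ t, t < m → IsLeast (excess p '' Set.Ico (bnd t) (bnd (t + 1))) (mins t))
    (hmaxs : ∀ t, t < m → IsGreatest (excess p '' Set.Ico (bnd t) (bnd (t + 1))) (maxs t))
    -- `j` : the least block index whose min and max enclose the target `excess p i`
    (j : ℕ) (hjm : j < m)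
    (hj : mins j ≤ excess p i ∧ excess p i ≤ maxs j)
    (hjleast : ∀ t, t < j → ¬(mins t ≤ excess p i ∧ excess p i ≤ maxs t))
    -- `j'` : the least block index whose min is at most the target `excess p i`
    (j' : ℕ) (hj'm : j' < m)
    (hj' : mins j' ≤ excess p i)
    (hj'least : ∀ t, t < j' → ¬(mins t ≤ excess p i)) :
    j' = j :=
  range_min_tree_forward_search_general p i hi hopen m bnd hbnd0 hbndmono mins maxs hmins hmaxs j hj
    hjleast j' hj'm hj' hj'least
end
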